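/- arXiv:2110.07037 — 3 statements merged into one kernel-verified Lean document; each statement's English description precedes it below -/
import Mathlib

section
/- Failure of the vanilla PINN loss for small Knudsen number: let ε > 0 and let E_v(f) = ∫₀¹∫_{−1}^{1} (ε v ∂_x f − ⟨f⟩ + f + ε v)² dv dx + ∫₀¹ (f(0,v) − 1)² dv + ∫_{−1}^{0} f(1,v)² dv be the vanilla PINN loss of the toy problem, whose exact solution is f*(x,v) = 1 − x. Then for every h ∈ C¹([0,1]) with h(0) = 1 and h(1) = 0, the v-independent function f(x,v) = h(x) satisfies E_v(f) = (2/3) ε² ∫₀¹ (h′(x) + 1)² dx, while ∫₀¹∫_{−1}^{1} (f − f*)² dv dx = 2 ∫₀¹ (h(x) − (1 − x))² dx. In particular, for h(x) = (1−x)² one gets E_v(f) = 2ε²/9 while the squared L² error equals 1/15, so the vanilla loss can be O(ε²) while the L² error remains O(1). -/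
open MeasureTheory Set

/-- Velocity average `⟨h⟩(x) = (1/2)∫_{-1}^{1} h(x,v) dv`. -/
noncomputable def vavg (h : ℝ → ℝ → ℝ) (x : ℝ) : ℝ := (1/2) * ∫ v in (-1:ℝ)..1, h x v

/-- The vanilla PINN loss of the toy problem
`ε v ∂_x f = ⟨f⟩ − f − ε v`, `f(0,v)=1` for `v ∈ (0,1]`, `f(1,v)=0` for `v ∈ [−1,0)`. -/
noncomputable def vanillaLoss (ε : ℝ) (f : ℝ → ℝ → ℝ) : ℝ :=
  (∫ x in (0:ℝ)..1, ∫ v in (-1:ℝ)..1,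
    (ε * v * deriv (fun y => f y v) x - vavg f x + f x v + ε * v) ^ 2)
  + (∫ v in (0:ℝ)..1, (f 0 v - 1) ^ 2)
  + (∫ v in (-1:ℝ)..0, (f 1 v) ^ 2)


/-! For a velocity-independent `f(x,v) = h(x)` the collision term `⟨f⟩ − f` vanishes
identically, and the inflow conditions hold exactly as soon as `h(0) = 1`, `h(1) = 0`.
The residual is then `ε v (h′ + 1)`, whose square integrates in `v` to `(2/3) ε² (h′ + 1)²`:
the loss only sees `h` through the `ε²`-weighted transport term, so it is `O(ε²)` even when
`h` stays at distance `O(1)` from `1 − x`. -/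

lemma vavg_of_velocity_independent (h : ℝ → ℝ) (x : ℝ) : vavg (fun y _ => h y) x = h x := by
  simp only [vavg, intervalIntegral.integral_const, smul_eq_mul]
  ring

lemma integral_mul_id_sq (c : ℝ) : ∫ v in (-1:ℝ)..1, (c * v) ^ 2 = 2 / 3 * c ^ 2 := by
  simp only [mul_pow, intervalIntegral.integral_const_mul, integral_pow]
  norm_num
  ring

lemma integral_integral_velocity_independent (g : ℝ → ℝ) (a b c d : ℝ) :
    ∫ x in a..b, ∫ _ in c..d, g x = (d - c) * ∫ x in a..b, g x := by
  simp only [intervalIntegral.integral_const, smul_eq_mul, intervalIntegral.integral_const_mul]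

lemma vanillaLoss_velocity_independent (ε : ℝ) (h : ℝ → ℝ) (h0 : h 0 = 1) (h1 : h 1 = 0) :
    vanillaLoss ε (fun x _ => h x) = 2 / 3 * ε ^ 2 * ∫ x in (0:ℝ)..1, (deriv h x + 1) ^ 2 := by
  have residual : ∀ x v : ℝ, ε * v * deriv h x - vavg (fun y _ => h y) x + h x + ε * v
      = ε * (deriv h x + 1) * v := by
    intro x v
    rw [vavg_of_velocity_independent]
    ring
  simp only [vanillaLoss, residual, integral_mul_id_sq, h0, h1]
  simp [intervalIntegral.integral_const_mul, mul_pow, mul_assoc]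

lemma deriv_one_sub_sq_add_one (x : ℝ) : deriv (fun y : ℝ => (1 - y) ^ 2) x + 1 = 2 * x - 1 := by
  rw [(((hasDerivAt_id' x).const_sub 1).fun_pow 2).deriv]
  push_cast
  ring

lemma integral_two_mul_sub_one_sq : ∫ x in (0:ℝ)..1, (2 * x - 1) ^ 2 = 1 / 3 := by
  rw [intervalIntegral.integral_comp_mul_sub (fun x => x ^ 2) two_ne_zero, integral_pow]
  norm_num

lemma integral_one_sub_sq_sub_one_sub_sq :
    ∫ x in (0:ℝ)..1, ((1 - x) ^ 2 - (1 - x)) ^ 2 = 1 / 30 := by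
  have antideriv : ∀ x : ℝ,
      HasDerivAt (fun x : ℝ => x ^ 5 / 5 - x ^ 4 / 2 + x ^ 3 / 3) (((1 - x) ^ 2 - (1 - x)) ^ 2) x := by
    intro x
    refine ((((hasDerivAt_pow 5 x).div_const 5).fun_sub ((hasDerivAt_pow 4 x).div_const 2)).fun_add
      ((hasDerivAt_pow 3 x).div_const 3)).congr_deriv ?_
    push_cast
    ring
  rw [intervalIntegral.integral_eq_sub_of_hasDerivAt (fun x _ => antideriv x)
    (Continuous.intervalIntegrable (by fun_prop) _ _)]
  norm_num

theorem vanilla_pinn_failure_general (ε : ℝ) :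
    (∀ h : ℝ → ℝ, ContDiffOn ℝ 1 h (Icc 0 1) → h 0 = 1 → h 1 = 0 →
      (vanillaLoss ε (fun x _ => h x)
          = (2/3) * ε ^ 2 * ∫ x in (0:ℝ)..1, (deriv h x + 1) ^ 2) ∧
      ((∫ x in (0:ℝ)..1, ∫ v in (-1:ℝ)..1, (h x - (1 - x)) ^ 2)
          = 2 * ∫ x in (0:ℝ)..1, (h x - (1 - x)) ^ 2)) ∧
    (vanillaLoss ε (fun x _ => (1 - x) ^ 2) = 2 * ε ^ 2 / 9) ∧
    ((∫ x in (0:ℝ)..1, ∫ v in (-1:ℝ)..1, ((1 - x) ^ 2 - (1 - x)) ^ 2) = 1 / 15) := by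
  refine ⟨fun h _ h0 h1 => ⟨vanillaLoss_velocity_independent ε h h0 h1, ?_⟩, ?_, ?_⟩
  · rw [integral_integral_velocity_independent (fun x => (h x - (1 - x)) ^ 2)]
    norm_num
  · rw [vanillaLoss_velocity_independent ε _ (by norm_num) (by norm_num)]
    simp only [deriv_one_sub_sq_add_one, integral_two_mul_sub_one_sq]
    ring
  · rw [integral_integral_velocity_independent (fun x => ((1 - x) ^ 2 - (1 - x)) ^ 2),
      integral_one_sub_sq_sub_one_sub_sq]
    norm_num

/-- Failure of the vanilla PINN loss for small Knudsen number: any `v`-independent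
`f(x,v) = h(x)` with `h ∈ C¹([0,1])`, `h(0)=1`, `h(1)=0` has vanilla loss
`(2/3) ε² ∫₀¹ (h′+1)²` while its squared `L²` distance to the exact solution
`f*(x,v) = 1 − x` equals `2 ∫₀¹ (h(x) − (1−x))²`.  In particular for `h(x) = (1−x)²`
the loss is `2ε²/9` while the squared `L²` error is `1/15`. -/
theorem vanilla_pinn_failure (ε : ℝ) (hε : 0 < ε) :
    (∀ h : ℝ → ℝ, ContDiffOn ℝ 1 h (Icc 0 1) → h 0 = 1 → h 1 = 0 →
      (vanillaLoss ε (fun x _ => h x)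
          = (2/3) * ε ^ 2 * ∫ x in (0:ℝ)..1, (deriv h x + 1) ^ 2) ∧
      ((∫ x in (0:ℝ)..1, ∫ v in (-1:ℝ)..1, (h x - (1 - x)) ^ 2)
          = 2 * ∫ x in (0:ℝ)..1, (h x - (1 - x)) ^ 2)) ∧
    (vanillaLoss ε (fun x _ => (1 - x) ^ 2) = 2 * ε ^ 2 / 9) ∧
    ((∫ x in (0:ℝ)..1, ∫ v in (-1:ℝ)..1, ((1 - x) ^ 2 - (1 - x)) ^ 2) = 1 / 15) :=
  vanilla_pinn_failure_general ε
end

section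
/- Uniqueness for the macro–micro system (1D, isotropic scattering): assume σ_min ≤ σ_s(x) ≤ σ_max and 0 ≤ σ_a(x) ≤ σ_max on [0,1] with 0 < σ_min ≤ σ_max, and let ε ∈ (0,1]. If (ρ₁, g₁) and (ρ₂, g₂), both in C¹([0,1]) × C¹(Ω) with ⟨g₁⟩ ≡ 0 and ⟨g₂⟩ ≡ 0, solve the macro–micro system with the same data σ_s, σ_a, G, φ, then ρ₁ = ρ₂ and g₁ = g₂. -/
/-!
Writing `F = ρ + ε g`, the macro–micro system with `⟨g⟩ = 0` is the radiative transfer equation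
for `F` with `⟨F⟩ = ρ`, so the difference `f` of two solutions solves the source-free equation
with zero inflow data. Its flux `E(x) = ∫ v f² dv` satisfies
`ε E' = -2 σ_s ∫ (f - ⟨f⟩)² - 2 ε² σ_a ∫ f² ≤ 0`, while `E(0) ≤ 0 ≤ E(1)`. Hence `E ≡ 0`, so
`f = ⟨f⟩` does not depend on `v`; comparing the equations at `v = ±1` then shows that `f` is
constant in `x`, hence zero by the inflow condition.
-/

open MeasureTheory Set Function

/-- `f ∈ C¹(Ω)` with `Ω = [0,1] × [−1,1]`. -/
def C1Omega (f : ℝ → ℝ → ℝ) : Prop :=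
  ContDiffOn ℝ 1 (uncurry f) (Icc (0:ℝ) 1 ×ˢ Icc (-1:ℝ) 1)

/-- `f` solves the 1D RTE `ε v ∂_x f = σ_s(⟨f⟩ − f) − ε² σ_a f + ε² G` on
`Ω = [0,1] × [−1,1]` with inflow boundary data `φ`. -/
def SolvesRTE (ε : ℝ) (σs σa G : ℝ → ℝ) (φ f : ℝ → ℝ → ℝ) : Prop :=
  (∀ x ∈ Icc (0:ℝ) 1, ∀ v ∈ Icc (-1:ℝ) 1,
    ε * v * deriv (fun y => f y v) x
      = σs x * (vavg f x - f x v) - ε ^ 2 * σa x * f x v + ε ^ 2 * G x) ∧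
  (∀ v ∈ Ioc (0:ℝ) 1, f 0 v = φ 0 v) ∧
  (∀ v ∈ Ico (-1:ℝ) 0, f 1 v = φ 1 v)

/-- The pair `(ρ, g)` solves the macro–micro system:
`⟨v ∂_x g⟩ = −σ_a ρ + G` on `[0,1]`;
`v ∂_x(ρ + ε g) − ε⟨v ∂_x g⟩ = σ_s(⟨g⟩ − g) − ε² σ_a g` on `Ω`;
`ρ(0) + ε g(0,v) = φ(0,v)` for `v ∈ (0,1]` and `ρ(1) + ε g(1,v) = φ(1,v)` for `v ∈ [−1,0)`. -/
def SolvesMM (ε : ℝ) (σs σa G : ℝ → ℝ) (φ : ℝ → ℝ → ℝ)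
    (ρ : ℝ → ℝ) (g : ℝ → ℝ → ℝ) : Prop :=
  (∀ x ∈ Icc (0:ℝ) 1,
    ((1/2) * ∫ v in (-1:ℝ)..1, v * deriv (fun y => g y v) x) = -(σa x) * ρ x + G x) ∧
  (∀ x ∈ Icc (0:ℝ) 1, ∀ v ∈ Icc (-1:ℝ) 1,
    v * deriv (fun y => ρ y + ε * g y v) x
      - ε * ((1/2) * ∫ w in (-1:ℝ)..1, w * deriv (fun y => g y w) x)
      = σs x * (vavg g x - g x v) - ε ^ 2 * σa x * g x v) ∧
  (∀ v ∈ Ioc (0:ℝ) 1, ρ 0 + ε * g 0 v = φ 0 v) ∧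
  (∀ v ∈ Ico (-1:ℝ) 0, ρ 1 + ε * g 1 v = φ 1 v)

section ParametricIntegral

variable {F F' : ℝ → ℝ → ℝ} {a b c d : ℝ}

theorem continuousOn_intervalIntegral_of_continuousOn_uncurry (hcd : c ≤ d)
    (hF : ContinuousOn (uncurry F) (Icc a b ×ˢ Icc c d)) :
    ContinuousOn (fun x => ∫ v in c..d, F x v) (Icc a b) := by
  rcases lt_or_ge b a with hba | hab
  · simp [Icc_eq_empty_of_lt hba]
  -- Clamping both variables extends `F` continuously to the whole plane.
  set G : ℝ → ℝ → ℝ := fun x v => F (projIcc a b hab x) (projIcc c d hcd v)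
  have hG : Continuous (uncurry G) :=
    hF.comp_continuous
      (f := fun p : ℝ × ℝ => ((projIcc a b hab p.1 : ℝ), (projIcc c d hcd p.2 : ℝ)))
      (by fun_prop) fun p => ⟨(projIcc a b hab p.1).2, (projIcc c d hcd p.2).2⟩
  refine (intervalIntegral.continuous_parametric_intervalIntegral_of_continuous'
    hG c d).continuousOn.congr fun x hx => intervalIntegral.integral_congr fun v hv => ?_
  rw [uIcc_of_le hcd] at hv
  simp [G, projIcc_of_mem _ hx, projIcc_of_mem _ hv]

theorem hasDerivAt_intervalIntegral_of_continuousOn_uncurry (hcd : c ≤ d)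
    (hF : ContinuousOn (uncurry F) (Icc a b ×ˢ Icc c d))
    (hF' : ContinuousOn (uncurry F') (Icc a b ×ˢ Icc c d))
    (hderiv : ∀ x ∈ Ioo a b, ∀ v ∈ Icc c d, HasDerivAt (fun y => F y v) (F' x v) x)
    {x₀ : ℝ} (hx₀ : x₀ ∈ Ioo a b) :
    HasDerivAt (fun x => ∫ v in c..d, F x v) (∫ v in c..d, F' x₀ v) x₀ := by
  obtain ⟨C, hC⟩ := (isCompact_Icc.prod isCompact_Icc).exists_bound_of_continuousOn hF'
  have hslice : ∀ {G : ℝ → ℝ → ℝ}, ContinuousOn (uncurry G) (Icc a b ×ˢ Icc c d) →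
      ∀ x ∈ Icc a b, ContinuousOn (G x) (Icc c d) := fun hG x hx =>
    hG.comp (f := fun v => (x, v)) (Continuous.continuousOn (by fun_prop)) fun v hv => ⟨hx, hv⟩
  have hmeas : ∀ {G : ℝ → ℝ → ℝ}, ContinuousOn (uncurry G) (Icc a b ×ˢ Icc c d) →
      ∀ x ∈ Icc a b, AEStronglyMeasurable (G x) (volume.restrict (uIoc c d)) := fun hG x hx =>
    ((hslice hG x hx).mono (uIoc_of_le hcd ▸ Ioc_subset_Icc_self)).aestronglyMeasurable
      measurableSet_uIoc
  have hsub : uIoc c d ⊆ Icc c d := uIoc_subset_uIcc.trans (uIcc_of_le hcd).subset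
  have hx₀' := Ioo_subset_Icc_self hx₀
  refine (intervalIntegral.hasDerivAt_integral_of_dominated_loc_of_deriv_le (bound := fun _ => C)
    (Ioo_mem_nhds hx₀.1 hx₀.2) ?_ ((hslice hF x₀ hx₀').intervalIntegrable_of_Icc hcd)
    (hmeas hF' x₀ hx₀') ?_ intervalIntegrable_const ?_).2
  · filter_upwards [Ioo_mem_nhds hx₀.1 hx₀.2] with x hx using hmeas hF x (Ioo_subset_Icc_self hx)
  · exact ae_of_all _ fun v hv x hx => hC (x, v) ⟨Ioo_subset_Icc_self hx, hsub hv⟩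
  · exact ae_of_all _ fun v hv x hx => hderiv x hx v (hsub hv)

end ParametricIntegral

theorem eqOn_zero_of_integral_eq_zero {h : ℝ → ℝ} {a b : ℝ} (hab : a < b)
    (hh : ContinuousOn h (Icc a b)) (h0 : ∀ x ∈ Icc a b, 0 ≤ h x)
    (hint : ∫ x in a..b, h x = 0) : EqOn h 0 (Icc a b) := by
  rw [intervalIntegral.integral_of_le hab.le] at hint
  have hnonneg : 0 ≤ᵐ[volume.restrict (Ioc a b)] h :=
    (ae_restrict_iff' measurableSet_Ioc).2 (ae_of_all _ fun x hx => h0 x (Ioc_subset_Icc_self hx))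
  have hae : h =ᵐ[volume.restrict (Ioc a b)] 0 :=
    (integral_eq_zero_iff_of_nonneg_ae hnonneg
      (hh.integrableOn_Icc.mono_set Ioc_subset_Icc_self)).1 hint
  rw [Measure.restrict_congr_set Ioc_ae_eq_Icc] at hae
  exact Measure.eqOn_Icc_of_ae_eq volume hab.ne hae hh continuousOn_const

abbrev phaseSpace : Set (ℝ × ℝ) := Icc 0 1 ×ˢ Icc (-1) 1

noncomputable def partialX (f : ℝ → ℝ → ℝ) (x v : ℝ) : ℝ :=
  fderivWithin ℝ (uncurry f) phaseSpace (x, v) (1, 0)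

namespace C1Omega

variable {f g : ℝ → ℝ → ℝ}

theorem sub (hf : C1Omega f) (hg : C1Omega g) : C1Omega fun x v => f x v - g x v :=
  ContDiffOn.sub hf hg

theorem of_contDiffOn_add_mul {ρ : ℝ → ℝ} (hρ : ContDiffOn ℝ 1 ρ (Icc 0 1)) (hg : C1Omega g)
    (ε : ℝ) : C1Omega fun x v => ρ x + ε * g x v :=
  (hρ.comp contDiffOn_fst fun _ hp => hp.1).add (contDiffOn_const.mul hg)

theorem continuousOn_velocity_slice (hf : C1Omega f) {x : ℝ} (hx : x ∈ Icc (0:ℝ) 1) :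
    ContinuousOn (f x) (Icc (-1) 1) :=
  hf.continuousOn.comp (f := fun v => (x, v)) (Continuous.continuousOn (by fun_prop))
    fun _ hv => ⟨hx, hv⟩

theorem continuousOn_space_slice (hf : C1Omega f) {v : ℝ} (hv : v ∈ Icc (-1:ℝ) 1) :
    ContinuousOn (fun y => f y v) (Icc 0 1) :=
  hf.continuousOn.comp (f := fun y => (y, v)) (Continuous.continuousOn (by fun_prop))
    fun _ hy => ⟨hy, hv⟩

theorem intervalIntegrable_velocity_slice (hf : C1Omega f) {x : ℝ} (hx : x ∈ Icc (0:ℝ) 1) :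
    IntervalIntegrable (f x) volume (-1) 1 :=
  (hf.continuousOn_velocity_slice hx).intervalIntegrable_of_Icc (by norm_num)

theorem continuousOn_partialX (hf : C1Omega f) :
    ContinuousOn (uncurry (partialX f)) phaseSpace :=
  (hf.continuousOn_fderivWithin ((uniqueDiffOn_Icc zero_lt_one).prod
    (uniqueDiffOn_Icc (by norm_num))) le_rfl).clm_apply continuousOn_const

theorem hasDerivAt_partialX (hf : C1Omega f) {x v : ℝ} (hx : x ∈ Ioo (0:ℝ) 1)
    (hv : v ∈ Icc (-1:ℝ) 1) : HasDerivAt (fun y => f y v) (partialX f x v) x := by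
  have hfx : HasFDerivWithinAt (uncurry f) (fderivWithin ℝ (uncurry f) phaseSpace (x, v))
      phaseSpace (x, v) :=
    (hf.differentiableOn one_ne_zero (x, v) ⟨Ioo_subset_Icc_self hx, hv⟩).hasFDerivWithinAt
  have hpath : HasDerivWithinAt (fun y => (y, v)) ((1:ℝ), (0:ℝ)) (Icc 0 1) x :=
    ((hasDerivAt_id x).prodMk (hasDerivAt_const x v)).hasDerivWithinAt
  exact (hfx.comp_hasDerivWithinAt x hpath fun y hy => show (y, v) ∈ phaseSpace from ⟨hy, hv⟩
    ).hasDerivAt (Icc_mem_nhds hx.1 hx.2)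

end C1Omega

section VelocityAverage

variable {f g : ℝ → ℝ → ℝ} {x : ℝ}

theorem vavg_sub (hf : IntervalIntegrable (f x) volume (-1) 1)
    (hg : IntervalIntegrable (g x) volume (-1) 1) :
    vavg (fun x v => f x v - g x v) x = vavg f x - vavg g x := by
  simp only [vavg, intervalIntegral.integral_sub hf hg]
  ring

theorem vavg_const_add_mul (ρ : ℝ → ℝ) (ε : ℝ) (hg : IntervalIntegrable (g x) volume (-1) 1) :
    vavg (fun x v => ρ x + ε * g x v) x = ρ x + ε * vavg g x := by
  simp only [vavg, intervalIntegral.integral_add intervalIntegrable_const (hg.const_mul ε),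
    intervalIntegral.integral_const_mul, intervalIntegral.integral_const]
  norm_num
  ring

theorem integral_mul_vavg_sub (hx : ContinuousOn (f x) (Icc (-1) 1)) :
    ∫ v in (-1:ℝ)..1, f x v * (vavg f x - f x v) =
      -∫ v in (-1:ℝ)..1, (f x v - vavg f x) ^ 2 := by
  have hint : ∀ {h : ℝ → ℝ}, ContinuousOn h (Icc (-1) 1) → IntervalIntegrable h volume (-1) 1 :=
    fun hh => hh.intervalIntegrable_of_Icc (by norm_num)
  have hcancel : ∫ v in (-1:ℝ)..1, vavg f x * (vavg f x - f x v) = 0 := by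
    rw [intervalIntegral.integral_const_mul, intervalIntegral.integral_sub
      intervalIntegrable_const (hint hx), intervalIntegral.integral_const, vavg]
    ring
  rw [eq_neg_iff_add_eq_zero, ← intervalIntegral.integral_add
    (hint (h := fun v => f x v * (vavg f x - f x v)) (hx.mul (continuousOn_const.sub hx)))
    (hint (h := fun v => (f x v - vavg f x) ^ 2) ((hx.sub continuousOn_const).pow 2)),
    ← hcancel]
  exact intervalIntegral.integral_congr fun v _ => by ring

end VelocityAverage

noncomputable def energyFlux (f : ℝ → ℝ → ℝ) (x : ℝ) : ℝ := ∫ v in (-1:ℝ)..1, v * f x v ^ 2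

section EnergyFlux

variable {f : ℝ → ℝ → ℝ}

theorem C1Omega.continuousOn_flux_integrand (hf : C1Omega f) :
    ContinuousOn (uncurry fun x v => v * f x v ^ 2) phaseSpace :=
  continuous_snd.continuousOn.mul (hf.continuousOn.pow 2)

theorem C1Omega.continuousOn_energyFlux (hf : C1Omega f) :
    ContinuousOn (energyFlux f) (Icc 0 1) :=
  continuousOn_intervalIntegral_of_continuousOn_uncurry (by norm_num)
    hf.continuousOn_flux_integrand

theorem C1Omega.hasDerivAt_energyFlux (hf : C1Omega f) {x : ℝ} (hx : x ∈ Ioo (0:ℝ) 1) :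
    HasDerivAt (energyFlux f) (∫ v in (-1:ℝ)..1, 2 * f x v * (v * partialX f x v)) x :=
  hasDerivAt_intervalIntegral_of_continuousOn_uncurry
    (F' := fun x v => 2 * f x v * (v * partialX f x v)) (by norm_num)
    hf.continuousOn_flux_integrand
    (((continuousOn_const (c := (2:ℝ))).mul hf.continuousOn).mul
      (continuous_snd.continuousOn.mul hf.continuousOn_partialX))
    (fun y hy v hv => ((hf.hasDerivAt_partialX hy hv).pow 2).const_mul v |>.congr_deriv (by ring))
    hx

theorem energyFlux_zero_nonpos (h0 : ∀ v ∈ Ioc (0:ℝ) 1, f 0 v = 0) : energyFlux f 0 ≤ 0 := by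
  rw [← neg_nonneg, energyFlux, ← intervalIntegral.integral_neg]
  refine intervalIntegral.integral_nonneg (by norm_num) fun v hv => ?_
  rcases le_or_gt v 0 with hv0 | hv0
  · exact neg_nonneg.2 (mul_nonpos_of_nonpos_of_nonneg hv0 (sq_nonneg _))
  · simp [h0 v ⟨hv0, hv.2⟩]

theorem energyFlux_one_nonneg (h1 : ∀ v ∈ Ico (-1:ℝ) 0, f 1 v = 0) : 0 ≤ energyFlux f 1 := by
  refine intervalIntegral.integral_nonneg (by norm_num) fun v hv => ?_
  rcases lt_or_ge v 0 with hv0 | hv0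
  · simp [h1 v ⟨hv.1, hv0⟩]
  · positivity

theorem mul_integral_flux_deriv_eq {d : ℝ → ℝ} {x ε σs σa : ℝ}
    (hx : ContinuousOn (f x) (Icc (-1) 1))
    (hrte : ∀ v ∈ Icc (-1:ℝ) 1, ε * (v * d v) = σs * (vavg f x - f x v) - ε ^ 2 * σa * f x v) :
    ε * ∫ v in (-1:ℝ)..1, 2 * f x v * (v * d v) =
      -2 * (σs * ∫ v in (-1:ℝ)..1, (f x v - vavg f x) ^ 2) -
        2 * (ε ^ 2 * σa * ∫ v in (-1:ℝ)..1, f x v ^ 2) := by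
  have hint : ∀ {h : ℝ → ℝ}, ContinuousOn h (Icc (-1) 1) → IntervalIntegrable h volume (-1) 1 :=
    fun hh => hh.intervalIntegrable_of_Icc (by norm_num)
  calc ε * ∫ v in (-1:ℝ)..1, 2 * f x v * (v * d v)
      = ∫ v in (-1:ℝ)..1,
          (2 * σs * (f x v * (vavg f x - f x v)) - 2 * ε ^ 2 * σa * f x v ^ 2) := by
        rw [← intervalIntegral.integral_const_mul]
        refine intervalIntegral.integral_congr fun v hv => ?_
        rw [uIcc_of_le (by norm_num)] at hv
        linear_combination 2 * f x v * hrte v hv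
    _ = _ := by
        rw [intervalIntegral.integral_sub, intervalIntegral.integral_const_mul,
          intervalIntegral.integral_const_mul, integral_mul_vavg_sub hx]
        · ring
        · exact (hint (hx.mul (continuousOn_const.sub hx))).const_mul _
        · exact (hint (hx.pow 2)).const_mul _

end EnergyFlux

section RTE

variable {f : ℝ → ℝ → ℝ} {ε : ℝ} {σs σa : ℝ → ℝ}

theorem C1Omega.eq_vavg_of_rte (hf : C1Omega f) (hε : 0 < ε)
    (hσs : ∀ x ∈ Ioo (0:ℝ) 1, 0 < σs x) (hσa : ∀ x ∈ Ioo (0:ℝ) 1, 0 ≤ σa x)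
    (hrte : ∀ x ∈ Ioo (0:ℝ) 1, ∀ v ∈ Icc (-1:ℝ) 1,
      ε * v * deriv (fun y => f y v) x = σs x * (vavg f x - f x v) - ε ^ 2 * σa x * f x v)
    (h0 : ∀ v ∈ Ioc (0:ℝ) 1, f 0 v = 0) (h1 : ∀ v ∈ Ico (-1:ℝ) 0, f 1 v = 0) :
    ∀ x ∈ Ioo (0:ℝ) 1, ∀ v ∈ Icc (-1:ℝ) 1, f x v = vavg f x := by
  have hslice : ∀ x ∈ Ioo (0:ℝ) 1, ContinuousOn (f x) (Icc (-1) 1) := fun x hx =>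
    hf.continuousOn_velocity_slice (Ioo_subset_Icc_self hx)
  have hdissip : ∀ x ∈ Ioo (0:ℝ) 1, ε * deriv (energyFlux f) x =
      -2 * (σs x * ∫ v in (-1:ℝ)..1, (f x v - vavg f x) ^ 2) -
        2 * (ε ^ 2 * σa x * ∫ v in (-1:ℝ)..1, f x v ^ 2) := fun x hx => by
    rw [(hf.hasDerivAt_energyFlux hx).deriv]
    refine mul_integral_flux_deriv_eq (hslice x hx) fun v hv => ?_
    rw [← (hf.hasDerivAt_partialX hx hv).deriv, ← mul_assoc]
    exact hrte x hx v hv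
  have hterms : ∀ x ∈ Ioo (0:ℝ) 1, 0 ≤ σs x * ∫ v in (-1:ℝ)..1, (f x v - vavg f x) ^ 2 ∧
      0 ≤ ε ^ 2 * σa x * ∫ v in (-1:ℝ)..1, f x v ^ 2 := fun x hx =>
    ⟨mul_nonneg (hσs x hx).le
        (intervalIntegral.integral_nonneg (by norm_num) fun _ _ => sq_nonneg _),
      mul_nonneg (mul_nonneg (sq_nonneg ε) (hσa x hx))
        (intervalIntegral.integral_nonneg (by norm_num) fun _ _ => sq_nonneg _)⟩
  have hanti : AntitoneOn (energyFlux f) (Icc 0 1) := by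
    refine antitoneOn_of_deriv_nonpos (convex_Icc 0 1) hf.continuousOn_energyFlux
      (fun x hx => ?_) fun x hx => ?_
    · rw [interior_Icc] at hx
      exact (hf.hasDerivAt_energyFlux hx).differentiableAt.differentiableWithinAt
    · rw [interior_Icc] at hx
      refine nonpos_of_mul_nonpos_right ?_ hε
      linarith [hdissip x hx, hterms x hx]
  have hflux : EqOn (energyFlux f) 0 (Ioo 0 1) := fun x hx =>
    le_antisymm ((hanti ⟨le_rfl, zero_le_one⟩ (Ioo_subset_Icc_self hx) hx.1.le).trans
      (energyFlux_zero_nonpos h0))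
      ((energyFlux_one_nonneg h1).trans
        (hanti (Ioo_subset_Icc_self hx) ⟨zero_le_one, le_rfl⟩ hx.2.le))
  intro x hx v hv
  have hderiv : deriv (energyFlux f) x = 0 := by
    rw [(hflux.eventuallyEq_of_mem (Ioo_mem_nhds hx.1 hx.2)).deriv_eq]
    exact deriv_const x 0
  have hvar : ∫ v in (-1:ℝ)..1, (f x v - vavg f x) ^ 2 = 0 := by
    have hzero : σs x * ∫ v in (-1:ℝ)..1, (f x v - vavg f x) ^ 2 = 0 := by
      have hdx := hdissip x hx
      rw [hderiv, mul_zero] at hdx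
      linarith [hterms x hx]
    exact (mul_eq_zero.1 hzero).resolve_left (hσs x hx).ne'
  have := eqOn_zero_of_integral_eq_zero (h := fun v => (f x v - vavg f x) ^ 2) (by norm_num)
    (((hslice x hx).sub continuousOn_const).pow 2) (fun v _ => sq_nonneg _) hvar hv
  simpa [sub_eq_zero] using this

theorem C1Omega.eq_zero_of_rte (hf : C1Omega f) (hε : 0 < ε)
    (hσs : ∀ x ∈ Ioo (0:ℝ) 1, 0 < σs x) (hσa : ∀ x ∈ Ioo (0:ℝ) 1, 0 ≤ σa x)
    (hrte : ∀ x ∈ Ioo (0:ℝ) 1, ∀ v ∈ Icc (-1:ℝ) 1,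
      ε * v * deriv (fun y => f y v) x = σs x * (vavg f x - f x v) - ε ^ 2 * σa x * f x v)
    (h0 : ∀ v ∈ Ioc (0:ℝ) 1, f 0 v = 0) (h1 : ∀ v ∈ Ico (-1:ℝ) 0, f 1 v = 0) :
    ∀ x ∈ Icc (0:ℝ) 1, ∀ v ∈ Icc (-1:ℝ) 1, f x v = 0 := by
  have hflat := hf.eq_vavg_of_rte hε hσs hσa hrte h0 h1
  have hI : (1:ℝ) ∈ Icc (-1) 1 := by norm_num
  have hI' : (-1:ℝ) ∈ Icc (-1) 1 := by norm_num
  -- With `f = ⟨f⟩` the equations at `v = 1` and `v = -1` differ only in the sign of the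
  -- transport term, which therefore vanishes.
  have hderiv : ∀ x ∈ Ioo (0:ℝ) 1, deriv (fun y => f y 1) x = 0 := fun x hx => by
    have hsame : (fun y => f y 1) =ᶠ[nhds x] fun y => f y (-1) :=
      Filter.eventually_of_mem (Ioo_mem_nhds hx.1 hx.2) fun y hy =>
        (hflat y hy 1 hI).trans (hflat y hy (-1) hI').symm
    have hplus := hrte x hx 1 hI
    have hminus := hrte x hx (-1) hI'
    rw [← hsame.deriv_eq, hflat x hx (-1) hI'] at hminus
    rw [hflat x hx 1 hI] at hplus
    have : 2 * ε * deriv (fun y => f y 1) x = 0 := by linear_combination hplus - hminus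
    simpa [hε.ne'] using this
  have hone : ∀ x ∈ Ioo (0:ℝ) 1, f x 1 = 0 := fun x hx => by
    obtain ⟨c, hc, hslope⟩ := exists_deriv_eq_slope (fun y => f y 1) hx.1
      ((hf.continuousOn_space_slice hI).mono (Icc_subset_Icc le_rfl hx.2.le)) fun y hy =>
        (hf.hasDerivAt_partialX ⟨hy.1, hy.2.trans hx.2⟩ hI).differentiableAt.differentiableWithinAt
    rw [hderiv c ⟨hc.1, hc.2.trans hx.2⟩, h0 1 ⟨zero_lt_one, le_rfl⟩, eq_comm,
      div_eq_zero_iff] at hslope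
    simpa [hx.1.ne'] using hslope
  have hinterior : EqOn (uncurry f) 0 (Ioo 0 1 ×ˢ Icc (-1) 1) := fun ⟨x, v⟩ ⟨hx, hv⟩ =>
    (hflat x hx v hv).trans ((hflat x hx 1 hI).symm.trans (hone x hx))
  intro x hx v hv
  exact hinterior.of_subset_closure hf.continuousOn continuousOn_const
    (prod_mono Ioo_subset_Icc_self le_rfl) (by simp [closure_prod_eq])
    (show (x, v) ∈ phaseSpace from ⟨hx, hv⟩)

end RTE

section MacroMicro

variable {ε : ℝ} {σs σa G : ℝ → ℝ} {φ : ℝ → ℝ → ℝ}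

theorem SolvesMM.rte_eq {ρ : ℝ → ℝ} {g : ℝ → ℝ → ℝ} (hs : SolvesMM ε σs σa G φ ρ g)
    (hm : ∀ x ∈ Icc (0:ℝ) 1, vavg g x = 0) {x v : ℝ} (hx : x ∈ Icc (0:ℝ) 1)
    (hv : v ∈ Icc (-1:ℝ) 1) :
    ε * v * deriv (fun y => ρ y + ε * g y v) x =
      σs x * (ρ x - (ρ x + ε * g x v)) - ε ^ 2 * σa x * (ρ x + ε * g x v) + ε ^ 2 * G x := by
  have hmicro := hs.2.1 x hx v hv
  rw [hs.1 x hx, hm x hx] at hmicro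
  linear_combination ε * hmicro

variable {ρ₁ ρ₂ : ℝ → ℝ} {g₁ g₂ : ℝ → ℝ → ℝ}

theorem vavg_sub_of_vavg_eq_zero (hg₁ : C1Omega g₁) (hg₂ : C1Omega g₂)
    (hm₁ : ∀ x ∈ Icc (0:ℝ) 1, vavg g₁ x = 0) (hm₂ : ∀ x ∈ Icc (0:ℝ) 1, vavg g₂ x = 0)
    {x : ℝ} (hx : x ∈ Icc (0:ℝ) 1) :
    vavg (fun x v => (ρ₁ x + ε * g₁ x v) - (ρ₂ x + ε * g₂ x v)) x = ρ₁ x - ρ₂ x := by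
  have hint₁ := hg₁.intervalIntegrable_velocity_slice hx
  have hint₂ := hg₂.intervalIntegrable_velocity_slice hx
  have hsum : ∀ {ρ : ℝ → ℝ} {g : ℝ → ℝ → ℝ}, IntervalIntegrable (g x) volume (-1) 1 →
      IntervalIntegrable (fun v => ρ x + ε * g x v) volume (-1) 1 := fun hg =>
    intervalIntegrable_const.add (hg.const_mul ε)
  rw [vavg_sub (hsum hint₁) (hsum hint₂), vavg_const_add_mul _ _ hint₁,
    vavg_const_add_mul _ _ hint₂, hm₁ x hx, hm₂ x hx]
  ring

theorem SolvesMM.rte_sub (hρ₁ : ContDiffOn ℝ 1 ρ₁ (Icc 0 1)) (hg₁ : C1Omega g₁)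
    (hρ₂ : ContDiffOn ℝ 1 ρ₂ (Icc 0 1)) (hg₂ : C1Omega g₂)
    (hm₁ : ∀ x ∈ Icc (0:ℝ) 1, vavg g₁ x = 0) (hm₂ : ∀ x ∈ Icc (0:ℝ) 1, vavg g₂ x = 0)
    (hs₁ : SolvesMM ε σs σa G φ ρ₁ g₁) (hs₂ : SolvesMM ε σs σa G φ ρ₂ g₂)
    {x v : ℝ} (hx : x ∈ Ioo (0:ℝ) 1) (hv : v ∈ Icc (-1:ℝ) 1) :
    let f : ℝ → ℝ → ℝ := fun x v => (ρ₁ x + ε * g₁ x v) - (ρ₂ x + ε * g₂ x v)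
    ε * v * deriv (fun y => f y v) x = σs x * (vavg f x - f x v) - ε ^ 2 * σa x * f x v := by
  intro f
  have hx' := Ioo_subset_Icc_self hx
  simp only [f]
  rw [deriv_fun_sub
    ((C1Omega.of_contDiffOn_add_mul hρ₁ hg₁ ε).hasDerivAt_partialX hx hv).differentiableAt
    ((C1Omega.of_contDiffOn_add_mul hρ₂ hg₂ ε).hasDerivAt_partialX hx hv).differentiableAt,
    vavg_sub_of_vavg_eq_zero hg₁ hg₂ hm₁ hm₂ hx']
  linear_combination hs₁.rte_eq hm₁ hx' hv - hs₂.rte_eq hm₂ hx' hv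

end MacroMicro

theorem macro_micro_uniqueness_general (σmin σmax : ℝ) (hσmin : 0 < σmin)
    (σs σa G : ℝ → ℝ) (φ : ℝ → ℝ → ℝ)
    (hσs : ∀ x ∈ Icc (0:ℝ) 1, σmin ≤ σs x ∧ σs x ≤ σmax)
    (hσa : ∀ x ∈ Icc (0:ℝ) 1, 0 ≤ σa x ∧ σa x ≤ σmax)
    (ε : ℝ) (hε : ε ∈ Ioc (0:ℝ) 1)
    (ρ₁ ρ₂ : ℝ → ℝ) (g₁ g₂ : ℝ → ℝ → ℝ)
    (hρ₁ : ContDiffOn ℝ 1 ρ₁ (Icc 0 1)) (hg₁ : C1Omega g₁)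
    (hρ₂ : ContDiffOn ℝ 1 ρ₂ (Icc 0 1)) (hg₂ : C1Omega g₂)
    (hm₁ : ∀ x ∈ Icc (0:ℝ) 1, vavg g₁ x = 0)
    (hm₂ : ∀ x ∈ Icc (0:ℝ) 1, vavg g₂ x = 0)
    (hs₁ : SolvesMM ε σs σa G φ ρ₁ g₁)
    (hs₂ : SolvesMM ε σs σa G φ ρ₂ g₂) :
    (∀ x ∈ Icc (0:ℝ) 1, ρ₁ x = ρ₂ x) ∧
    (∀ x ∈ Icc (0:ℝ) 1, ∀ v ∈ Icc (-1:ℝ) 1, g₁ x v = g₂ x v) := by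
  have hzero := ((C1Omega.of_contDiffOn_add_mul hρ₁ hg₁ ε).sub
    (C1Omega.of_contDiffOn_add_mul hρ₂ hg₂ ε)).eq_zero_of_rte hε.1
    (fun x hx => hσmin.trans_le (hσs x (Ioo_subset_Icc_self hx)).1)
    (fun x hx => (hσa x (Ioo_subset_Icc_self hx)).1)
    (fun x hx v hv => SolvesMM.rte_sub hρ₁ hg₁ hρ₂ hg₂ hm₁ hm₂ hs₁ hs₂ hx hv)
    (fun v hv => sub_eq_zero.2 ((hs₁.2.2.1 v hv).trans (hs₂.2.2.1 v hv).symm))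
    (fun v hv => sub_eq_zero.2 ((hs₁.2.2.2 v hv).trans (hs₂.2.2.2 v hv).symm))
  have hρ : ∀ x ∈ Icc (0:ℝ) 1, ρ₁ x = ρ₂ x := fun x hx => by
    rw [← sub_eq_zero, ← vavg_sub_of_vavg_eq_zero hg₁ hg₂ hm₁ hm₂ hx, vavg,
      intervalIntegral.integral_congr (g := fun _ => 0)
        fun v hv => hzero x hx v (by rwa [uIcc_of_le (by norm_num)] at hv)]
    simp
  refine ⟨hρ, fun x hx v hv => ?_⟩
  have hfx := hzero x hx v hv
  simp only [hρ x hx, add_sub_add_left_eq_sub, ← mul_sub, mul_eq_zero, hε.1.ne', false_or,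
    sub_eq_zero] at hfx
  exact hfx

/-- Uniqueness for the macro–micro system (1D, isotropic scattering): under the bounds
`0 < σ_min ≤ σ_s ≤ σ_max` and `0 ≤ σ_a ≤ σ_max` on `[0,1]` and for `ε ∈ (0,1]`, two `C¹`
solutions of the macro–micro system with mean-zero micro parts and the same data
coincide on `[0,1]` and on `Ω = [0,1] × [−1,1]` respectively. -/
theorem macro_micro_uniqueness (σmin σmax : ℝ) (hσmin : 0 < σmin) (hσ : σmin ≤ σmax)
    (σs σa G : ℝ → ℝ) (φ : ℝ → ℝ → ℝ)
    (hσs : ∀ x ∈ Icc (0:ℝ) 1, σmin ≤ σs x ∧ σs x ≤ σmax)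
    (hσa : ∀ x ∈ Icc (0:ℝ) 1, 0 ≤ σa x ∧ σa x ≤ σmax)
    (ε : ℝ) (hε : ε ∈ Ioc (0:ℝ) 1)
    (ρ₁ ρ₂ : ℝ → ℝ) (g₁ g₂ : ℝ → ℝ → ℝ)
    (hρ₁ : ContDiffOn ℝ 1 ρ₁ (Icc 0 1)) (hg₁ : C1Omega g₁)
    (hρ₂ : ContDiffOn ℝ 1 ρ₂ (Icc 0 1)) (hg₂ : C1Omega g₂)
    (hm₁ : ∀ x ∈ Icc (0:ℝ) 1, vavg g₁ x = 0)
    (hm₂ : ∀ x ∈ Icc (0:ℝ) 1, vavg g₂ x = 0)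
    (hs₁ : SolvesMM ε σs σa G φ ρ₁ g₁)
    (hs₂ : SolvesMM ε σs σa G φ ρ₂ g₂) :
    (∀ x ∈ Icc (0:ℝ) 1, ρ₁ x = ρ₂ x) ∧
    (∀ x ∈ Icc (0:ℝ) 1, ∀ v ∈ Icc (-1:ℝ) 1, g₁ x v = g₂ x v) :=
  macro_micro_uniqueness_general σmin σmax hσmin σs σa G φ hσs hσa ε hε ρ₁ ρ₂ g₁ g₂ hρ₁ hg₁ hρ₂ hg₂
    hm₁ hm₂ hs₁ hs₂
end

section
/- Zero flux for half-space solutions converging at infinity: let f ∈ C¹([0,∞) × [−1,1]) be bounded, satisfy v ∂_z f(z,v) = ⟨f(z,·)⟩ − f(z,v) for all (z,v), and suppose there exists a constant c ∈ ℝ with f(z,v) → c as z → ∞ for every v ∈ [−1,1]. Then (1/2)∫_{−1}^{1} v f(z,v) dv = 0 for every z ≥ 0. -/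
/-!
Multiplying the equation by `v` gives `∂_z (v f) = ⟨f⟩ - f`, whose velocity integral vanishes.
Hence the flux `J z = ∫ v f(z,v) dv` has zero derivative on `(0,∞)`; being continuous on `[0,∞)`
it is constant there. By bounded convergence `J z → ∫ v c dv = 0` as `z → ∞`.
-/

open MeasureTheory Set Function Filter

open scoped Topology Interval

section BoundedConvergence

variable {E : Type*} [NormedAddCommGroup E] [NormedSpace ℝ E] {a b M : ℝ}

theorem tendsto_intervalIntegral_of_continuousOn_of_norm_le {ι : Type*} {l : Filter ι}
    [l.IsCountablyGenerated] {F : ι → ℝ → E} {g : ℝ → E} (hab : a ≤ b)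
    (hF : ∀ᶠ i in l, ContinuousOn (F i) (Icc a b))
    (hM : ∀ᶠ i in l, ∀ t ∈ Icc a b, ‖F i t‖ ≤ M)
    (hlim : ∀ t ∈ Icc a b, Tendsto (F · t) l (𝓝 (g t))) :
    Tendsto (fun i => ∫ t in a..b, F i t) l (𝓝 (∫ t in a..b, g t)) := by
  have hIoc : Ι a b ⊆ Icc a b := uIcc_of_le hab ▸ uIoc_subset_uIcc
  refine intervalIntegral.tendsto_integral_filter_of_dominated_convergence (fun _ => M)
    ?_ ?_ intervalIntegrable_const (ae_of_all _ fun t ht => hlim t (hIoc ht))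
  · exact hF.mono fun i hi => (hi.mono hIoc).aestronglyMeasurable measurableSet_uIoc
  · exact hM.mono fun i hi => ae_of_all _ fun t ht => hi t (hIoc ht)

theorem continuousOn_intervalIntegral_of_norm_le {X : Type*} [TopologicalSpace X]
    [FirstCountableTopology X] {g : X → ℝ → E} {s : Set X} (hab : a ≤ b)
    (hg : ContinuousOn (uncurry g) (s ×ˢ Icc a b)) (hM : ∀ x ∈ s, ∀ t ∈ Icc a b, ‖g x t‖ ≤ M) :
    ContinuousOn (fun x => ∫ t in a..b, g x t) s := fun x hx =>
  tendsto_intervalIntegral_of_continuousOn_of_norm_le hab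
    (eventually_mem_nhdsWithin.mono fun y hy => hg.uncurry_left y hy)
    (eventually_mem_nhdsWithin.mono hM) fun t ht => hg.uncurry_right t ht x hx

end BoundedConvergence

theorem eq_of_continuousOn_Ici_of_hasDerivAt_zero {g : ℝ → ℝ} {a x y : ℝ}
    (hg : ContinuousOn g (Ici a)) (hg' : ∀ t ∈ Ioi a, HasDerivAt g 0 t) (hx : a ≤ x)
    (hxy : x ≤ y) : g y = g x := by
  rcases hxy.eq_or_lt with rfl | hlt
  · rfl
  obtain ⟨t, -, ht⟩ := exists_hasDerivAt_eq_slope g (fun _ => 0) hlt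
    (hg.mono fun t ht => hx.trans ht.1) fun t ht => hg' t (hx.trans_lt ht.1)
  rw [eq_comm, div_eq_zero_iff, sub_eq_zero, sub_eq_zero] at ht
  exact ht.resolve_right hlt.ne'

section VelocityAverage

variable {g : ℝ → ℝ} {M v : ℝ}

theorem intervalIntegral_average_sub_eq_zero (hg : IntervalIntegrable g volume (-1) 1) :
    ∫ v in (-1:ℝ)..1, ((1/2) * ∫ w in (-1:ℝ)..1, g w) - g v = 0 := by
  rw [intervalIntegral.integral_sub intervalIntegrable_const hg, intervalIntegral.integral_const,
    smul_eq_mul]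
  ring

theorem norm_average_sub_le (hM : ∀ w ∈ Icc (-1:ℝ) 1, |g w| ≤ M) (hv : v ∈ Icc (-1:ℝ) 1) :
    ‖((1/2) * ∫ w in (-1:ℝ)..1, g w) - g v‖ ≤ 2 * M := by
  have hIoc : Ι (-1:ℝ) 1 ⊆ Icc (-1) 1 :=
    uIcc_of_le (by norm_num : (-1:ℝ) ≤ 1) ▸ uIoc_subset_uIcc
  have hI : ‖∫ w in (-1:ℝ)..1, g w‖ ≤ M * |1 - (-1)| :=
    intervalIntegral.norm_integral_le_of_norm_le_const fun w hw =>
      (Real.norm_eq_abs _).trans_le (hM w (hIoc hw))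
  have htri := abs_sub ((1/2) * ∫ w in (-1:ℝ)..1, g w) (g v)
  rw [abs_mul] at htri
  norm_num at hI htri ⊢
  linarith [hM v hv]

theorem norm_mul_le_of_mem_Icc_of_abs_le {x : ℝ} (hv : v ∈ Icc (-1:ℝ) 1) (hx : |x| ≤ M) :
    ‖v * x‖ ≤ M := by
  rw [Real.norm_eq_abs, abs_mul]
  exact (mul_le_of_le_one_left (abs_nonneg x) (abs_le.2 hv)).trans hx

end VelocityAverage

section Flux

variable {f : ℝ → ℝ → ℝ} {M : ℝ}

theorem continuousOn_flux (hf : ContinuousOn (uncurry f) (Ici 0 ×ˢ Icc (-1) 1))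
    (hM : ∀ z ∈ Ici (0:ℝ), ∀ v ∈ Icc (-1:ℝ) 1, |f z v| ≤ M) :
    ContinuousOn (fun z => ∫ v in (-1:ℝ)..1, v * f z v) (Ici 0) :=
  continuousOn_intervalIntegral_of_norm_le (by norm_num) (continuous_snd.continuousOn.mul hf)
    fun z hz v hv => norm_mul_le_of_mem_Icc_of_abs_le hv (hM z hz v hv)

theorem hasDerivAt_mul_of_transport_eq (hf : ContDiffOn ℝ 1 (uncurry f) (Ici 0 ×ˢ Icc (-1) 1))
    (heq : ∀ z ∈ Ici (0:ℝ), ∀ v ∈ Icc (-1:ℝ) 1,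
      v * deriv (fun z' => f z' v) z = ((1/2) * ∫ w in (-1:ℝ)..1, f z w) - f z v)
    {s v : ℝ} (hs : 0 < s) (hv : v ∈ Icc (-1:ℝ) 1) :
    HasDerivAt (fun z => v * f z v) (((1/2) * ∫ w in (-1:ℝ)..1, f s w) - f s v) s := by
  have hsection : ContDiffOn ℝ 1 (fun z => f z v) (Ici 0) :=
    hf.comp (contDiff_id.prodMk contDiff_const).contDiffOn fun z hz => ⟨hz, hv⟩
  have hdiff : DifferentiableAt ℝ (fun z => f z v) s :=
    (hsection.differentiableOn one_ne_zero).differentiableAt (Ici_mem_nhds hs)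
  rw [← heq s hs.le v hv]
  exact hdiff.hasDerivAt.const_mul v

theorem hasDerivAt_flux_zero (hf : ContDiffOn ℝ 1 (uncurry f) (Ici 0 ×ˢ Icc (-1) 1))
    (hM : ∀ z ∈ Ici (0:ℝ), ∀ v ∈ Icc (-1:ℝ) 1, |f z v| ≤ M)
    (heq : ∀ z ∈ Ici (0:ℝ), ∀ v ∈ Icc (-1:ℝ) 1,
      v * deriv (fun z' => f z' v) z = ((1/2) * ∫ w in (-1:ℝ)..1, f z w) - f z v)
    {s : ℝ} (hs : 0 < s) :
    HasDerivAt (fun z => ∫ v in (-1:ℝ)..1, v * f z v) 0 s := by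
  have hIoc : Ι (-1:ℝ) 1 ⊆ Icc (-1) 1 :=
    uIcc_of_le (by norm_num : (-1:ℝ) ≤ 1) ▸ uIoc_subset_uIcc
  have hcont : ∀ z ∈ Ici (0:ℝ), ContinuousOn (f z) (Icc (-1) 1) := fun z hz =>
    hf.continuousOn.uncurry_left z hz
  have hderiv : HasDerivAt (fun z => ∫ v in (-1:ℝ)..1, v * f z v)
      (∫ v in (-1:ℝ)..1, ((1/2) * ∫ w in (-1:ℝ)..1, f s w) - f s v) s :=
    (intervalIntegral.hasDerivAt_integral_of_dominated_loc_of_deriv_le (bound := fun _ => 2 * M)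
      (Ioi_mem_nhds hs)
      (eventually_gt_nhds hs |>.mono fun z hz =>
        ((continuousOn_id.mul (hcont z hz.le)).mono hIoc).aestronglyMeasurable measurableSet_uIoc)
      ((continuousOn_id.mul (hcont s hs.le)).intervalIntegrable_of_Icc (by norm_num))
      (((continuousOn_const.sub (hcont s hs.le)).mono hIoc).aestronglyMeasurable
        measurableSet_uIoc)
      (ae_of_all _ fun v hv z hz => norm_average_sub_le (hM z (le_of_lt (mem_Ioi.1 hz)))
        (hIoc hv))
      intervalIntegrable_const
      (ae_of_all _ fun v hv z hz => hasDerivAt_mul_of_transport_eq hf heq hz (hIoc hv))).2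
  rwa [intervalIntegral_average_sub_eq_zero
    ((hcont s hs.le).intervalIntegrable_of_Icc (by norm_num))] at hderiv

end Flux

/-- Zero flux for half-space solutions converging at infinity: if
`f ∈ C¹([0,∞) × [−1,1])` is bounded, satisfies `v ∂_z f(z,v) = ⟨f(z,·)⟩ − f(z,v)` for
all `z ≥ 0`, `v ∈ [−1,1]`, and `f(z,v) → c` as `z → ∞` for every `v ∈ [−1,1]` with `c`
independent of `v`, then `(1/2)∫_{−1}^{1} v f(z,v) dv = 0` for every `z ≥ 0`. -/
theorem halfspace_zero_flux (f : ℝ → ℝ → ℝ)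
    (hf : ContDiffOn ℝ 1 (uncurry f) (Ici (0:ℝ) ×ˢ Icc (-1:ℝ) 1))
    (hbdd : ∃ M : ℝ, ∀ z ∈ Ici (0:ℝ), ∀ v ∈ Icc (-1:ℝ) 1, |f z v| ≤ M)
    (heq : ∀ z ∈ Ici (0:ℝ), ∀ v ∈ Icc (-1:ℝ) 1,
      v * deriv (fun z' => f z' v) z
        = ((1/2) * ∫ w in (-1:ℝ)..1, f z w) - f z v)
    (c : ℝ)
    (hlim : ∀ v ∈ Icc (-1:ℝ) 1, Tendsto (fun z => f z v) atTop (nhds c)) :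
    ∀ z ∈ Ici (0:ℝ), ((1/2) * ∫ v in (-1:ℝ)..1, v * f z v) = 0 := by
  intro z hz
  obtain ⟨M, hM⟩ := hbdd
  have hflux_const : ∀ Z ≥ z, ∫ v in (-1:ℝ)..1, v * f Z v = ∫ v in (-1:ℝ)..1, v * f z v :=
    fun Z hZ => eq_of_continuousOn_Ici_of_hasDerivAt_zero (continuousOn_flux hf.continuousOn hM)
      (fun s hs => hasDerivAt_flux_zero hf hM heq hs) hz hZ
  have hflux_lim : Tendsto (fun Z => ∫ v in (-1:ℝ)..1, v * f Z v) atTop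
      (𝓝 (∫ v in (-1:ℝ)..1, v * c)) := by
    refine tendsto_intervalIntegral_of_continuousOn_of_norm_le (M := M) (by norm_num)
      ((eventually_ge_atTop 0).mono fun Z hZ => ?_) ((eventually_ge_atTop 0).mono fun Z hZ => ?_)
      fun v hv => (hlim v hv).const_mul v
    · exact continuousOn_id.mul (hf.continuousOn.uncurry_left Z hZ)
    · exact fun v hv => norm_mul_le_of_mem_Icc_of_abs_le hv (hM Z hZ v hv)
  have hflux_eq : ∫ v in (-1:ℝ)..1, v * f z v = ∫ v in (-1:ℝ)..1, v * c :=
    tendsto_nhds_unique (tendsto_const_nhds.congr'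
      ((eventually_ge_atTop z).mono fun Z hZ => (hflux_const Z hZ).symm)) hflux_lim
  rw [hflux_eq, intervalIntegral.integral_mul_const, integral_id]
  norm_num
end
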